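/- Suppose gcd(T, q) = 1 and f over GF(q) with f(0) = 1 is biperiodic with biperiod T (every sequence generated by the recurrence with characteristic polynomial f has least period either 1 or T, and some sequence has period T). Then f is squarefree apart from possibly a single factor (1-x): f = (1-x)^{d_0}·g_1···g_l with d_0 ∈ {0,1}, the g_i distinct irreducible polynomials each of order T, and Π g_i(0) = 1. -/

import Mathlib

/-!
Let `g ∣ f`. Then `g(0) ≠ 0`, so the root `x` of `g` is a unit of `F[X]/(g)` of multiplicative
order `ord g`, and `aₙ = φ(x⁻ⁿ)` solves the recurrence for every linear form `φ`. Taking for `φ` the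
coefficient of `X^(deg g - 1)` of the reduced representative, no nonzero `z` has `φ(xʲz) = 0` for
all `j`, which forces the least period of `a` to be exactly `ord g`. Hence every divisor of `f` has
order `1` or `T`; in particular `f ∣ X^T - 1`, which is squarefree because `char F ∤ T`. So `f` is a
product of distinct irreducibles, normalised to constant term `1`, and the only one of them that
can have order `1` is `1 - X`.
-/

open Polynomial

/-- The order of a polynomial `g` (with `g(0) ≠ 0`): the least `j ≥ 1` with `g ∣ x^j - 1`. -/
noncomputable def polyOrd {F : Type*} [Field F] (g : Polynomial F) : ℕ :=
  sInf {j : ℕ | 1 ≤ j ∧ g ∣ X ^ j - 1}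

/-- `0` when `a` is not eventually periodic. -/
noncomputable def leastPeriod {α : Type*} (a : ℕ → α) : ℕ :=
  sInf {p | 1 ≤ p ∧ ∃ l, ∀ n ≥ l, a (n + p) = a n}

def IsRecurrent {R : Type*} [Semiring R] (r : ℕ) (c : ℕ → R) (a : ℕ → R) : Prop :=
  ∀ n, a (n + r) = ∑ i ∈ Finset.range r, c i * a (n + r - 1 - i)

theorem pow_eq_pow_of_mul_eq_one_of_orderOf_dvd {A : Type*} [CommMonoid A] {x y : A}
    (hxy : x * y = 1) {j m : ℕ} (h : orderOf x ∣ j + m) : x ^ j = y ^ m :=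
  calc x ^ j = x ^ j * (x * y) ^ m := by rw [hxy, one_pow, mul_one]
    _ = x ^ (j + m) * y ^ m := by rw [mul_pow, pow_add, mul_assoc]
    _ = y ^ m := by rw [orderOf_dvd_iff_pow_eq_one.mp h, one_mul]

theorem isRecurrent_apply_pow_of_mul_eq_one {R A : Type*} [CommSemiring R] [CommSemiring A]
    [Algebra R A] (φ : A →ₗ[R] R) {r : ℕ} {c : ℕ → R} {x y : A} (hxy : x * y = 1)
    (hx : ∑ i ∈ Finset.range r, c i • x ^ (i + 1) = 1) :
    IsRecurrent r c fun n => φ (y ^ n) := by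
  intro n
  have hterm : ∀ i ∈ Finset.range r, x ^ (i + 1) * y ^ (n + r) = y ^ (n + r - 1 - i) := by
    intro i hi
    have hsplit : n + r = (i + 1) + (n + r - 1 - i) := by have := Finset.mem_range.mp hi; omega
    rw [hsplit, pow_add y, ← mul_assoc, ← mul_pow, hxy, one_pow, one_mul, ← hsplit]
  calc φ (y ^ (n + r)) = φ ((∑ i ∈ Finset.range r, c i • x ^ (i + 1)) * y ^ (n + r)) := by
        rw [hx, one_mul]
    _ = ∑ i ∈ Finset.range r, c i * φ (x ^ (i + 1) * y ^ (n + r)) := by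
        simp only [Finset.sum_mul, smul_mul_assoc, map_sum, map_smul, smul_eq_mul]
    _ = ∑ i ∈ Finset.range r, c i * φ (y ^ (n + r - 1 - i)) :=
        Finset.sum_congr rfl fun i hi => by rw [hterm i hi]

theorem leastPeriod_apply_pow_eq_orderOf {A M Φ : Type*} [CommRing A] [AddCommGroup M]
    [FunLike Φ A M] [AddMonoidHomClass Φ A M] (φ : Φ) {x y : A} (hxy : x * y = 1)
    (hx : IsOfFinOrder x) (hφ : ∀ z, (∀ j, φ (x ^ j * z) = 0) → z = 0) :
    leastPeriod (fun n => φ (y ^ n)) = orderOf x := by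
  have he := hx.orderOf_pos
  have hmem : orderOf x ∈ {p | 1 ≤ p ∧ ∃ l, ∀ n ≥ l, φ (y ^ (n + p)) = φ (y ^ n)} := by
    refine ⟨he, 0, fun n _ => ?_⟩
    rw [pow_add, ← pow_eq_pow_of_mul_eq_one_of_orderOf_dvd hxy (j := 0) (m := orderOf x)
      (by simp), pow_zero, mul_one]
  refine le_antisymm (Nat.sInf_le hmem) (le_csInf ⟨_, hmem⟩ ?_)
  rintro p ⟨hp, l, hl⟩
  beta_reduce at hl
  have hyp : y ^ p = 1 := by
    refine sub_eq_zero.mp (hφ _ fun j => ?_)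
    -- `x ^ j` is also a power `y ^ m` of `y` with `m ≥ l`
    have hle : l + j ≤ orderOf x * (l + j) := Nat.le_mul_of_pos_left _ he
    have hm : x ^ j = y ^ (orderOf x * (l + j) - j) :=
      pow_eq_pow_of_mul_eq_one_of_orderOf_dvd hxy ⟨l + j, by omega⟩
    rw [mul_sub, mul_one, hm, ← pow_add, map_sub, hl _ (by omega), sub_self]
  refine orderOf_le_of_pow_eq_one (by omega) ?_
  calc x ^ p = x ^ p * y ^ p := by rw [hyp, mul_one]
    _ = 1 := by rw [← mul_pow, hxy, one_pow]

theorem Finset.prod_eq_pow_mul_prod_erase {α : Type*} [DecidableEq α] [CommMonoid α]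
    (S : Finset α) (a : α) :
    ∏ x ∈ S, x = a ^ (if a ∈ S then 1 else 0) * ∏ x ∈ S.erase a, x := by
  split_ifs with h
  · rw [pow_one, Finset.mul_prod_erase S (fun x => x) h]
  · rw [pow_zero, one_mul, Finset.erase_eq_of_notMem h]

theorem Finset.exists_fin_injective_prod_eq {α : Type*} [CommMonoid α] (S : Finset α) :
    ∃ (l : ℕ) (g : Fin l → α), Function.Injective g ∧ (∀ i, g i ∈ S) ∧ ∏ i, g i = ∏ x ∈ S, x :=
  ⟨S.card, fun i => S.equivFin.symm i, Subtype.val_injective.comp S.equivFin.symm.injective,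
    fun i => (S.equivFin.symm i).2,
    (S.equivFin.symm.prod_comp _).trans (S.prod_coe_sort fun x => x)⟩

section PolyOrd

variable {F : Type*} [Field F]

theorem dvd_X_pow_sub_one_iff_root_pow_eq_one {g : F[X]} {j : ℕ} :
    g ∣ X ^ j - 1 ↔ AdjoinRoot.root g ^ j = 1 := by
  rw [← AdjoinRoot.mk_eq_zero, map_sub, map_pow, AdjoinRoot.mk_X, map_one, sub_eq_zero]

theorem polyOrd_eq_orderOf_root (g : F[X]) : polyOrd g = orderOf (AdjoinRoot.root g) := by
  simp only [polyOrd, orderOf, Function.minimalPeriod_eq_sInf_n_pos_IsPeriodicPt,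
    isPeriodicPt_mul_iff_pow_eq_one, dvd_X_pow_sub_one_iff_root_pow_eq_one]
  rfl

theorem dvd_X_pow_polyOrd_sub_one (g : F[X]) : g ∣ X ^ polyOrd g - 1 := by
  rw [dvd_X_pow_sub_one_iff_root_pow_eq_one, polyOrd_eq_orderOf_root]
  exact pow_orderOf_eq_one _

theorem polyOrd_eq_of_associated {g g' : F[X]} (h : Associated g g') : polyOrd g = polyOrd g' := by
  simp only [polyOrd, h.dvd_iff_dvd_left]

end PolyOrd

namespace AdjoinRoot

variable {F : Type*} [Field F] {g : F[X]}

theorem isUnit_root_of_coeff_zero_ne_zero (h : g.coeff 0 ≠ 0) : IsUnit (root g) := by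
  obtain ⟨q, hq⟩ := X_dvd_sub_C (p := g)
  have hmk := congrArg (mk g) hq
  rw [map_sub, mk_self, mk_C, map_mul, mk_X, zero_sub] at hmk
  have hunit : IsUnit (root g * mk g q) := by
    rw [← hmk, IsUnit.neg_iff]
    exact (isUnit_iff_ne_zero.mpr h).map (of g)
  exact isUnit_of_mul_isUnit_left hunit

theorem isOfFinOrder_root [Finite F] (hg : g.Monic) (h : g.coeff 0 ≠ 0) :
    IsOfFinOrder (root g) := by
  have := hg.finite_adjoinRoot
  have : Finite (AdjoinRoot g) := Module.finite_of_finite F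
  exact isOfFinOrder_iff_isUnit.mpr (isUnit_root_of_coeff_zero_ne_zero h)

noncomputable def topCoeff (hg : g.Monic) : AdjoinRoot g →ₗ[F] F :=
  (lcoeff F (g.natDegree - 1)).comp (modByMonicHom hg)

theorem eq_zero_of_forall_topCoeff_root_pow_mul_eq_zero (hg : g.Monic) {z : AdjoinRoot g}
    (hz : ∀ j, topCoeff hg (root g ^ j * z) = 0) : z = 0 := by
  obtain ⟨q, rfl⟩ := mk_surjective z
  have hzp : mk g (q %ₘ g) = mk g q := by rw [← modByMonicHom_mk hg]; exact mk_leftInverse hg _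
  set p := q %ₘ g
  by_contra hz0
  have hp0 : p ≠ 0 := by rintro hp; rw [hp, map_zero] at hzp; exact hz0 hzp.symm
  have hlt : p.natDegree < g.natDegree :=
    natDegree_lt_natDegree hp0 (degree_modByMonic_lt _ hg)
  -- shifting `p` so that its leading coefficient sits at `X ^ (deg g - 1)`
  set j := g.natDegree - 1 - p.natDegree
  have hdeg : (X ^ j * p).natDegree = g.natDegree - 1 := by
    rw [natDegree_mul (pow_ne_zero _ X_ne_zero) hp0, natDegree_X_pow]; omega
  have hred : (X ^ j * p) %ₘ g = X ^ j * p := by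
    rw [modByMonic_eq_self_iff hg, degree_eq_natDegree hg.ne_zero]
    refine degree_le_natDegree.trans_lt ?_
    rw [hdeg]; exact_mod_cast (by omega : g.natDegree - 1 < g.natDegree)
  have := hz j
  rw [← hzp, ← mk_X, ← map_pow, ← map_mul, topCoeff, LinearMap.comp_apply, modByMonicHom_mk,
    hred, lcoeff_apply, show g.natDegree - 1 = p.natDegree + j by omega, coeff_X_pow_mul] at this
  exact hp0 (leadingCoeff_eq_zero.mp this)

end AdjoinRoot

section ConnectionPoly

variable {F : Type*} [Field F]

/-- The paper's `f = 1 - ∑_{i=1}^r c_i x^i`, with `c i` standing for `c_{i+1}`. -/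
noncomputable def connectionPoly (r : ℕ) (c : ℕ → F) : F[X] :=
  1 - ∑ i ∈ Finset.range r, C (c i) * X ^ (i + 1)

theorem connectionPoly_eval_zero (r : ℕ) (c : ℕ → F) : (connectionPoly r c).eval 0 = 1 := by
  simp [connectionPoly, eval_finsetSum]

theorem eval_zero_ne_zero_of_dvd_connectionPoly {r : ℕ} {c : ℕ → F} {g : F[X]}
    (h : g ∣ connectionPoly r c) : g.eval 0 ≠ 0 :=
  ne_zero_of_dvd_ne_zero (by rw [connectionPoly_eval_zero]; exact one_ne_zero) (eval_dvd h)

theorem sum_smul_root_pow_eq_one {r : ℕ} {c : ℕ → F} {g : F[X]} (h : g ∣ connectionPoly r c) :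
    ∑ i ∈ Finset.range r, c i • AdjoinRoot.root g ^ (i + 1) = 1 := by
  have := AdjoinRoot.mk_eq_zero.mpr h
  rw [connectionPoly, map_sub, map_one, sub_eq_zero, map_sum] at this
  rw [this]
  simp only [map_mul, map_pow, AdjoinRoot.mk_X, AdjoinRoot.mk_C, Algebra.smul_def,
    AdjoinRoot.algebraMap_eq]

theorem exists_isRecurrent_leastPeriod_eq_polyOrd_of_monic [Finite F] {r : ℕ} {c : ℕ → F}
    {g : F[X]} (hg : g.Monic) (h : g ∣ connectionPoly r c) :
    ∃ a, IsRecurrent r c a ∧ leastPeriod a = polyOrd g := by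
  have hx := AdjoinRoot.isOfFinOrder_root hg
    (by rw [coeff_zero_eq_eval_zero]; exact eval_zero_ne_zero_of_dvd_connectionPoly h)
  refine ⟨fun n => AdjoinRoot.topCoeff hg ((↑hx.unit⁻¹ : AdjoinRoot g) ^ n),
    isRecurrent_apply_pow_of_mul_eq_one _ hx.unit.mul_inv (sum_smul_root_pow_eq_one h), ?_⟩
  rw [polyOrd_eq_orderOf_root]
  exact leastPeriod_apply_pow_eq_orderOf _ hx.unit.mul_inv hx
    fun _ => AdjoinRoot.eq_zero_of_forall_topCoeff_root_pow_mul_eq_zero hg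

theorem exists_isRecurrent_leastPeriod_eq_polyOrd [Finite F] {r : ℕ} {c : ℕ → F} {g : F[X]}
    (h : g ∣ connectionPoly r c) : ∃ a, IsRecurrent r c a ∧ leastPeriod a = polyOrd g := by
  have hg : g ≠ 0 := by rintro rfl; exact eval_zero_ne_zero_of_dvd_connectionPoly h eval_zero
  have hassoc : Associated (g * C g.leadingCoeff⁻¹) g :=
    associated_mul_unit_left _ _ (isUnit_C.mpr (by simpa using hg))
  obtain ⟨a, ha, hper⟩ :=
    exists_isRecurrent_leastPeriod_eq_polyOrd_of_monic (monic_mul_leadingCoeff_inv hg)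
      (hassoc.dvd.trans h)
  exact ⟨a, ha, hper.trans (polyOrd_eq_of_associated hassoc)⟩

end ConnectionPoly

section Factorization

variable {F : Type*} [Field F]

theorem natCast_ne_zero_of_coprime_card [Fintype F] {n : ℕ} (h : n.Coprime (Fintype.card F)) :
    (n : F) ≠ 0 := by
  intro hn
  obtain ⟨k, hp, hcard⟩ := FiniteField.card F (ringChar F)
  have hdvd : ringChar F ∣ Nat.gcd n (Fintype.card F) :=
    Nat.dvd_gcd ((ringChar.spec F n).mp hn) (hcard ▸ dvd_pow_self _ k.ne_zero)
  exact hp.one_lt.ne' (Nat.dvd_one.mp (h ▸ hdvd))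

theorem squarefree_X_pow_sub_one {n : ℕ} (hn : (n : F) ≠ 0) : Squarefree (X ^ n - 1 : F[X]) := by
  simpa using (separable_X_pow_sub_C (1 : F) hn one_ne_zero).squarefree

theorem eq_of_associated_of_eval_zero_eq {f g : F[X]} (h : Associated f g)
    (h0 : f.eval 0 = g.eval 0) (hf : f.eval 0 ≠ 0) : f = g := by
  obtain ⟨u, rfl⟩ := h
  obtain ⟨a, -, ha⟩ := Polynomial.isUnit_iff.mp u.isUnit
  rw [← ha, eval_mul, eval_C] at h0
  rw [← ha, (mul_eq_left₀ hf).mp h0.symm, C_1, mul_one]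

theorem exists_finset_prod_eq_of_squarefree {f : F[X]} (hf : Squarefree f) (h0 : f.eval 0 = 1) :
    ∃ S : Finset F[X], (∀ g ∈ S, Irreducible g ∧ g.eval 0 = 1) ∧ ∏ g ∈ S, g = f := by
  classical
  open UniqueFactorizationMonoid in
  set P := (normalizedFactors f).toFinset
  have hP : ∀ p ∈ P, Irreducible p ∧ p.eval 0 ≠ 0 ∧ normalize p = p := by
    intro p hp
    rw [Multiset.mem_toFinset] at hp
    refine ⟨irreducible_of_normalized_factor p hp, fun hp0 => ?_, normalize_normalized_factor p hp⟩
    have := eval_dvd (x := (0 : F)) (dvd_of_mem_normalizedFactors hp)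
    rw [hp0, h0, zero_dvd_iff] at this
    exact one_ne_zero this
  set ν : F[X] → F[X] := fun p => C (p.eval 0)⁻¹ * p
  have hν : ∀ p ∈ P, Associated (ν p) p := fun p hp =>
    associated_unit_mul_left _ _ (isUnit_C.mpr (inv_ne_zero (hP p hp).2.1).isUnit)
  have hν0 : ∀ p ∈ P, (ν p).eval 0 = 1 := fun p hp => by
    simp only [ν, eval_mul, eval_C, inv_mul_cancel₀ (hP p hp).2.1]
  have hinj : Set.InjOn ν P := fun p hp p' hp' h => by
    rw [← (hP p hp).2.2, ← (hP p' hp').2.2, normalize_eq_normalize_iff_associated]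
    exact (hν p hp).symm.trans (h ▸ hν p' hp')
  have hprodP : ∏ p ∈ P, p = (normalizedFactors f).prod := by
    rw [Finset.prod_eq_multiset_prod, Multiset.toFinset_val,
      Multiset.dedup_eq_self.mpr ((squarefree_iff_nodup_normalizedFactors hf.ne_zero).mp hf),
      Multiset.map_id']
  refine ⟨P.image ν, Finset.forall_mem_image.mpr fun p hp =>
    ⟨(hν p hp).symm.irreducible (hP p hp).1, hν0 p hp⟩, ?_⟩
  rw [Finset.prod_image hinj]
  refine eq_of_associated_of_eval_zero_eq ?_ ?_ ?_
  · exact (Associated.prod P ν id hν).trans (hprodP ▸ prod_normalizedFactors hf.ne_zero)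
  all_goals rw [eval_prod, Finset.prod_congr rfl hν0, Finset.prod_const_one]
  · exact h0.symm
  · exact one_ne_zero

theorem eq_one_sub_X_of_polyOrd_eq_one {g : F[X]} (hg : Irreducible g) (h0 : g.eval 0 = 1)
    (h1 : polyOrd g = 1) : g = 1 - X := by
  have hdvd : g ∣ X - C 1 := by simpa [h1] using dvd_X_pow_polyOrd_sub_one g
  have hassoc : Associated g (1 - X) := by
    rw [← neg_sub, ← C_1]
    exact (hg.associated_of_dvd (irreducible_X_sub_C 1) hdvd).neg_right
  exact eq_of_associated_of_eval_zero_eq hassoc (by simp [h0]) (by simp [h0])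

end Factorization

theorem stmt_10_general {F : Type*} [Field F] [Fintype F] (q : ℕ) (hq : q = Fintype.card F)
    (r : ℕ) (c : ℕ → F) (T : ℕ) (hcop : Nat.Coprime T q)
    (hbi : {p : ℕ | ∃ a : ℕ → F,
        (∀ n : ℕ, a (n + r) = ∑ i ∈ Finset.range r, c i * a (n + r - 1 - i)) ∧
        p = sInf {p' : ℕ | 1 ≤ p' ∧ ∃ l : ℕ, ∀ n ≥ l, a (n + p') = a n}} = {1, T}) :
    ∃ (d₀ l : ℕ) (g : Fin l → Polynomial F),
      d₀ ≤ 1 ∧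
      (1 - ∑ i ∈ Finset.range r, C (c i) * X ^ (i + 1) : Polynomial F) =
        (1 - X) ^ d₀ * ∏ i : Fin l, g i ∧
      (∀ i : Fin l, Irreducible (g i)) ∧
      Function.Injective g ∧
      (∀ i : Fin l, polyOrd (g i) = T) ∧
      (∏ i : Fin l, (g i).eval 0) = 1 := by
  classical
  have hord : ∀ g, g ∣ connectionPoly r c → polyOrd g = 1 ∨ polyOrd g = T := fun g hg => by
    obtain ⟨a, ha, hper⟩ := exists_isRecurrent_leastPeriod_eq_polyOrd hg
    have hmem : polyOrd g ∈ ({1, T} : Set ℕ) := hbi ▸ ⟨a, ha, hper.symm⟩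
    simpa using hmem
  -- both possible orders divide `T`, so `f ∣ X ^ T - 1`, squarefree since `char F ∤ T`
  have hsqf : Squarefree (connectionPoly r c) := by
    have hT : (T : F) ≠ 0 := natCast_ne_zero_of_coprime_card (hq ▸ hcop)
    refine (squarefree_X_pow_sub_one hT).squarefree_of_dvd ((dvd_X_pow_polyOrd_sub_one _).trans ?_)
    rcases hord _ dvd_rfl with h | h <;> rw [h]
    simpa using sub_one_dvd_pow_sub_one (X : F[X]) T
  obtain ⟨S, hS, hprod⟩ := exists_finset_prod_eq_of_squarefree hsqf (connectionPoly_eval_zero r c)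
  obtain ⟨l, g, hinj, hmem, hg⟩ := (S.erase (1 - X)).exists_fin_injective_prod_eq
  have hgS : ∀ i, g i ∈ S := fun i => Finset.mem_of_mem_erase (hmem i)
  refine ⟨if 1 - X ∈ S then 1 else 0, l, g, by split_ifs <;> omega, ?_,
    fun i => (hS _ (hgS i)).1, hinj, fun i => ?_, Finset.prod_eq_one fun i _ => (hS _ (hgS i)).2⟩
  · rw [hg, ← Finset.prod_eq_pow_mul_prod_erase, hprod]; rfl
  · have hdvd : g i ∣ connectionPoly r c := hprod ▸ Finset.dvd_prod_of_mem _ (hgS i)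
    exact (hord _ hdvd).resolve_left fun h1 => Finset.ne_of_mem_erase (hmem i)
      (eq_one_sub_X_of_polyOrd_eq_one (hS _ (hgS i)).1 (hS _ (hgS i)).2 h1)

/-- Structure of biperiodic characteristic polynomials when `gcd(T, q) = 1`: if every
sequence generated by the recurrence with characteristic polynomial
`f = 1 - ∑_{i=1}^r c_i x^i` has least period `1` or `T` (and both occur), then
`f = (1-x)^{d₀} · g₁ ⋯ g_l` with `d₀ ∈ {0,1}`, the `g_i` distinct irreducible polynomials
each of order `T`, and `∏ g_i(0) = 1`.

Indexing convention: `a 0, …, a (r-1)` encode the initial state and `c i` denotes the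
paper's `c_{i+1}`. -/
theorem stmt_10 {F : Type*} [Field F] [Fintype F] (q : ℕ) (hq : q = Fintype.card F)
    (r : ℕ) (hr : 0 < r) (c : ℕ → F) (hc : c (r - 1) ≠ 0)
    (T : ℕ) (hT : 2 ≤ T) (hcop : Nat.Coprime T q)
    (hbi : {p : ℕ | ∃ a : ℕ → F,
        (∀ n : ℕ, a (n + r) = ∑ i ∈ Finset.range r, c i * a (n + r - 1 - i)) ∧
        p = sInf {p' : ℕ | 1 ≤ p' ∧ ∃ l : ℕ, ∀ n ≥ l, a (n + p') = a n}} = {1, T}) :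
    ∃ (d₀ l : ℕ) (g : Fin l → Polynomial F),
      d₀ ≤ 1 ∧
      (1 - ∑ i ∈ Finset.range r, C (c i) * X ^ (i + 1) : Polynomial F) =
        (1 - X) ^ d₀ * ∏ i : Fin l, g i ∧
      (∀ i : Fin l, Irreducible (g i)) ∧
      Function.Injective g ∧
      (∀ i : Fin l, polyOrd (g i) = T) ∧
      (∏ i : Fin l, (g i).eval 0) = 1 :=
  stmt_10_general q hq r c T hcop hbi
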